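/- Let J_≥ = {f ∈ C^∞(ℝ) | f(x) = 0 for all x ≥ 0} and J_≤ = {f ∈ C^∞(ℝ) | f(x) = 0 for all x ≤ 0}. Then J_≥ ∩ J_≤ = {0}, and J_≥ + J_≤ equals the set of smooth functions flat at 0, i.e. {f ∈ C^∞(ℝ) | the n-th iterated derivative of f at 0 is 0 for every n ∈ ℕ}. Equivalently, every smooth function on ℝ all of whose derivatives vanish at 0 can be written in a unique way as the sum of a smooth function vanishing on [0,∞) and a smooth function vanishing on (−∞,0]. -/

import Mathlib

open scoped Manifold

noncomputable section

/-- The ring `C^∞(ℝ)` of smooth real-valued functions on `ℝ`. -/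
abbrev SmoothR : Type := C^(⊤ : ℕ∞)⟮modelWithCornersSelf ℝ ℝ, ℝ; ℝ⟯

/-- The ideal `J_≥` of smooth functions vanishing at all `x ≥ 0`. -/
def Jge : Ideal SmoothR where
  carrier := {f : SmoothR | ∀ x : ℝ, 0 ≤ x → f x = 0}
  add_mem' := by intro a b ha hb x hx; simp [ha x hx, hb x hx]
  zero_mem' := by intro x hx; simp
  smul_mem' := by intro c f hf x hx; simp [smul_eq_mul, hf x hx]

/-- The ideal `J_≤` of smooth functions vanishing at all `x ≤ 0`. -/
def Jle : Ideal SmoothR where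
  carrier := {f : SmoothR | ∀ x : ℝ, x ≤ 0 → f x = 0}
  add_mem' := by intro a b ha hb x hx; simp [ha x hx, hb x hx]
  zero_mem' := by intro x hx; simp
  smul_mem' := by intro c f hf x hx; simp [smul_eq_mul, hf x hx]

namespace Aux

open Set Filter

/-- Truncation: keep `f` on `(-∞,0]`, zero on `(0,∞)`. -/
noncomputable def trunc (f : ℝ → ℝ) : ℝ → ℝ := fun x => if x ≤ 0 then f x else 0

lemma trunc_eqOn_Iic (f : ℝ → ℝ) : EqOn (trunc f) f (Iic 0) := by
  intro x hx; simp [trunc, mem_Iic.1 hx]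

lemma trunc_eqOn_Ici (f : ℝ → ℝ) (h0 : f 0 = 0) : EqOn (trunc f) 0 (Ici 0) := by
  intro x hx
  rcases eq_or_lt_of_le (mem_Ici.1 hx : (0:ℝ) ≤ x) with h | h
  · simp [trunc, ← h, h0]
  · simp [trunc, not_le.2 h]

lemma trunc_hasDerivAt {f : ℝ → ℝ} (hd : Differentiable ℝ f) (h0 : f 0 = 0)
    (h1 : deriv f 0 = 0) (x : ℝ) : HasDerivAt (trunc f) (trunc (deriv f) x) x := by
  rcases lt_trichotomy x 0 with h | h | h
  · have heq : trunc f =ᶠ[nhds x] f := by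
      filter_upwards [Iio_mem_nhds h] with y hy
      exact trunc_eqOn_Iic f (mem_Iic.2 (le_of_lt hy))
    have : trunc (deriv f) x = deriv f x := trunc_eqOn_Iic _ (mem_Iic.2 (le_of_lt h))
    rw [this]
    exact (hd x).hasDerivAt.congr_of_eventuallyEq heq
  · subst h
    have hle : HasDerivWithinAt (trunc f) 0 (Iic 0) 0 := by
      have := (hd 0).hasDerivAt.hasDerivWithinAt (s := Iic (0:ℝ))
      rw [h1] at this
      exact this.congr (trunc_eqOn_Iic f) (by simp [trunc, h0])
    have hge : HasDerivWithinAt (trunc f) 0 (Ici 0) 0 := by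
      have : HasDerivWithinAt (fun _ : ℝ => (0:ℝ)) 0 (Ici 0) 0 :=
        (hasDerivAt_const _ _).hasDerivWithinAt
      exact this.congr (fun y hy => trunc_eqOn_Ici f h0 hy) (by simp [trunc, h0])
    have := hle.union hge
    rw [Iic_union_Ici] at this
    rw [hasDerivWithinAt_univ] at this
    simpa [trunc, h1] using this
  · have heq : trunc f =ᶠ[nhds x] (fun _ => (0:ℝ)) := by
      filter_upwards [Ioi_mem_nhds h] with y hy
      simp [trunc, not_le.2 (mem_Ioi.1 hy : (0:ℝ) < y)]
    have : trunc (deriv f) x = 0 := by simp [trunc, not_le.2 h]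
    rw [this]
    exact (hasDerivAt_const x (0:ℝ)).congr_of_eventuallyEq heq

lemma deriv_trunc {f : ℝ → ℝ} (hd : Differentiable ℝ f) (h0 : f 0 = 0)
    (h1 : deriv f 0 = 0) : deriv (trunc f) = trunc (deriv f) :=
  funext fun x => (trunc_hasDerivAt hd h0 h1 x).deriv

lemma flat_deriv {f : ℝ → ℝ} (hf : ∀ n : ℕ, iteratedDeriv n f 0 = 0) :
    ∀ n : ℕ, iteratedDeriv n (deriv f) 0 = 0 := by
  intro n
  have := hf (n + 1)
  rwa [iteratedDeriv_succ'] at this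

lemma contDiff_trunc (n : ℕ) : ∀ f : ℝ → ℝ, ContDiff ℝ (↑(⊤:ℕ∞)) f →
    (∀ k : ℕ, iteratedDeriv k f 0 = 0) → ContDiff ℝ (n : WithTop ℕ∞) (trunc f) := by
  induction n with
  | zero =>
    intro f hf hflat
    rw [show ((0:ℕ) : WithTop ℕ∞) = 0 by rfl, contDiff_zero]
    have h0 : f 0 = 0 := by simpa using hflat 0
    exact Continuous.if_le hf.continuous continuous_const continuous_id continuous_const
      (fun x hx => by rw [hx, h0])
  | succ n ih =>
    intro f hf hflat
    have h0 : f 0 = 0 := by simpa using hflat 0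
    have h1 : deriv f 0 = 0 := by simpa [iteratedDeriv_one] using hflat 1
    have hd : Differentiable ℝ f := hf.differentiable (by simp)
    have hderiv : ContDiff ℝ (↑(⊤:ℕ∞)) (deriv f) := by
      simpa using hf.iterate_deriv 1
    rw [show ((n+1 : ℕ) : WithTop ℕ∞) = (n : WithTop ℕ∞) + 1 by push_cast; ring,
      contDiff_succ_iff_deriv]
    refine ⟨fun x => (trunc_hasDerivAt hd h0 h1 x).differentiableAt, by simp, ?_⟩
    rw [deriv_trunc hd h0 h1]
    exact ih (deriv f) hderiv (flat_deriv hflat)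

lemma contDiff_trunc_top {f : ℝ → ℝ} (hf : ContDiff ℝ (↑(⊤:ℕ∞)) f)
    (hflat : ∀ k : ℕ, iteratedDeriv k f 0 = 0) : ContDiff ℝ (↑(⊤:ℕ∞)) (trunc f) :=
  contDiff_infty.2 fun n => contDiff_trunc n f hf hflat

/-- A smooth function vanishing on `Ici 0` has all iterated derivatives vanishing on `Ici 0`. -/
lemma flat_of_vanish_Ici {f : ℝ → ℝ} (hf : ContDiff ℝ (↑(⊤:ℕ∞)) f)
    (h : ∀ x, 0 ≤ x → f x = 0) : ∀ n : ℕ, ∀ x, 0 ≤ x → iteratedDeriv n f x = 0 := by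
  intro n
  induction n with
  | zero => simpa using h
  | succ n ih =>
    intro x hx
    rw [iteratedDeriv_succ]
    have hdn : Differentiable ℝ (iteratedDeriv n f) := by
      have : ContDiff ℝ (↑(⊤:ℕ∞)) (iteratedDeriv n f) := by
        rw [iteratedDeriv_eq_iterate]; exact hf.iterate_deriv n
      exact this.differentiable (by simp)
    rcases eq_or_lt_of_le hx with h' | h'
    · subst h'
      have h1 : HasDerivWithinAt (iteratedDeriv n f) (deriv (iteratedDeriv n f) 0) (Ici 0) 0 :=
        (hdn 0).hasDerivAt.hasDerivWithinAt
      have h2 : HasDerivWithinAt (iteratedDeriv n f) 0 (Ici 0) 0 := by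
        have : HasDerivWithinAt (fun _ : ℝ => (0:ℝ)) 0 (Ici 0) 0 :=
          (hasDerivAt_const _ _).hasDerivWithinAt
        exact this.congr (fun y hy => ih y hy) (ih 0 le_rfl)
      have hu : UniqueDiffWithinAt ℝ (Ici (0:ℝ)) 0 := uniqueDiffOn_Ici 0 0 self_mem_Ici
      exact (h1.derivWithin hu).symm.trans (h2.derivWithin hu)
    · have heq : iteratedDeriv n f =ᶠ[nhds x] (fun _ => (0:ℝ)) := by
        filter_upwards [Ioi_mem_nhds h'] with y hy
        exact ih y (le_of_lt (hy : (0:ℝ) < y))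
      rw [heq.deriv_eq]
      simp

/-- A smooth function vanishing on `Iic 0` has all iterated derivatives vanishing on `Iic 0`. -/
lemma flat_of_vanish_Iic {f : ℝ → ℝ} (hf : ContDiff ℝ (↑(⊤:ℕ∞)) f)
    (h : ∀ x, x ≤ 0 → f x = 0) : ∀ n : ℕ, ∀ x, x ≤ 0 → iteratedDeriv n f x = 0 := by
  intro n
  induction n with
  | zero => simpa using h
  | succ n ih =>
    intro x hx
    rw [iteratedDeriv_succ]
    have hdn : Differentiable ℝ (iteratedDeriv n f) := by
      have : ContDiff ℝ (↑(⊤:ℕ∞)) (iteratedDeriv n f) := by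
        rw [iteratedDeriv_eq_iterate]; exact hf.iterate_deriv n
      exact this.differentiable (by simp)
    rcases eq_or_lt_of_le hx with h' | h'
    · subst h'
      have h1 : HasDerivWithinAt (iteratedDeriv n f) (deriv (iteratedDeriv n f) 0) (Iic 0) 0 :=
        (hdn 0).hasDerivAt.hasDerivWithinAt
      have h2 : HasDerivWithinAt (iteratedDeriv n f) 0 (Iic 0) 0 := by
        have : HasDerivWithinAt (fun _ : ℝ => (0:ℝ)) 0 (Iic 0) 0 :=
          (hasDerivAt_const _ _).hasDerivWithinAt
        exact this.congr (fun y hy => ih y hy) (ih 0 le_rfl)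
      have hu : UniqueDiffWithinAt ℝ (Iic (0:ℝ)) 0 := uniqueDiffOn_Iic 0 0 self_mem_Iic
      exact (h1.derivWithin hu).symm.trans (h2.derivWithin hu)
    · have heq : iteratedDeriv n f =ᶠ[nhds x] (fun _ => (0:ℝ)) := by
        filter_upwards [Iio_mem_nhds h'] with y hy
        exact ih y (le_of_lt (hy : y < 0))
      rw [heq.deriv_eq]
      simp

lemma iteratedDeriv_add_apply {f g : ℝ → ℝ} (hf : ContDiff ℝ (↑(⊤:ℕ∞)) f)
    (hg : ContDiff ℝ (↑(⊤:ℕ∞)) g) (n : ℕ) (x : ℝ) :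
    iteratedDeriv n (f + g) x = iteratedDeriv n f x + iteratedDeriv n g x := by
  simp only [iteratedDeriv]
  rw [iteratedFDeriv_add_apply (hf.contDiffAt.of_le (by exact_mod_cast le_top))
    (hg.contDiffAt.of_le (by exact_mod_cast le_top))]
  simp

lemma smooth_coe (f : SmoothR) : ContDiff ℝ (↑(⊤:ℕ∞)) (f : ℝ → ℝ) :=
  contMDiff_iff_contDiff.1 f.contMDiff

end Aux

/-- `J_≥ ∩ J_≤ = {0}`, and `J_≥ + J_≤` is exactly the set of smooth
functions all of whose iterated derivatives vanish at `0`; equivalently, every smooth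
function flat at `0` is in a unique way the sum of a smooth function vanishing on
`[0,∞)` and a smooth function vanishing on `(-∞,0]`. -/
theorem inf_eq_bot_and_sup_eq_flat :
    (Jge ⊓ Jle = ⊥) ∧
    ((Jge ⊔ Jle : Ideal SmoothR) : Set SmoothR)
      = {f : SmoothR | ∀ n : ℕ, iteratedDeriv n (f : ℝ → ℝ) 0 = 0} ∧
    (∀ f : SmoothR, (∀ n : ℕ, iteratedDeriv n (f : ℝ → ℝ) 0 = 0) →
      ∃! p : SmoothR × SmoothR,
        (∀ x : ℝ, 0 ≤ x → p.1 x = 0) ∧ (∀ x : ℝ, x ≤ 0 → p.2 x = 0) ∧ f = p.1 + p.2) := by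
  open Aux in
  -- decomposition construction
  have decomp : ∀ f : SmoothR, (∀ n : ℕ, iteratedDeriv n (f : ℝ → ℝ) 0 = 0) →
      ∃ a b : SmoothR, (∀ x : ℝ, 0 ≤ x → a x = 0) ∧ (∀ x : ℝ, x ≤ 0 → b x = 0) ∧ f = a + b := by
    intro f hflat
    have hf := smooth_coe f
    have h0 : (f : ℝ → ℝ) 0 = 0 := by simpa using hflat 0
    set a : SmoothR := ⟨trunc (f : ℝ → ℝ), contMDiff_iff_contDiff.2 (contDiff_trunc_top hf hflat)⟩
      with ha_def
    refine ⟨a, f - a, ?_, ?_, by ring⟩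
    · intro x hx
      exact trunc_eqOn_Ici (f : ℝ → ℝ) h0 hx
    · intro x hx
      have : a x = f x := trunc_eqOn_Iic (f : ℝ → ℝ) hx
      simp [this]
  refine ⟨?_, ?_, ?_⟩
  · -- intersection is trivial
    rw [eq_bot_iff]
    intro f hf
    rw [Submodule.mem_bot]
    obtain ⟨h1, h2⟩ := Submodule.mem_inf.1 hf
    apply ContMDiffMap.ext
    intro x
    rcases le_total x 0 with h | h
    · simpa using h2 x h
    · simpa using h1 x h
  · -- sup = flat functions
    ext f
    constructor
    · intro hf n
      obtain ⟨g, hg, h, hh, rfl⟩ := Submodule.mem_sup.1 hf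
      have hcoe : ((g + h : SmoothR) : ℝ → ℝ) = (g : ℝ → ℝ) + (h : ℝ → ℝ) := by
        funext x; simp
      rw [hcoe, iteratedDeriv_add_apply (smooth_coe g) (smooth_coe h)]
      rw [flat_of_vanish_Ici (smooth_coe g) hg n 0 le_rfl,
        flat_of_vanish_Iic (smooth_coe h) hh n 0 le_rfl]
      simp
    · intro hf
      obtain ⟨a, b, ha, hb, hab⟩ := decomp f hf
      exact Submodule.mem_sup.2 ⟨a, ha, b, hb, hab.symm⟩
  · -- unique decomposition
    intro f hflat
    obtain ⟨a, b, ha, hb, hab⟩ := decomp f hflat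
    refine ⟨(a, b), ⟨ha, hb, hab⟩, ?_⟩
    rintro ⟨a', b'⟩ ⟨ha', hb', hab'⟩
    have key : ∀ x : ℝ, a' x = a x := by
      intro x
      rcases le_total x 0 with h | h
      · have h1 : b' x = 0 := hb' x h
        have h2 : b x = 0 := hb x h
        have e1 : f x = a' x + b' x := by rw [hab']; simp
        have e2 : f x = a x + b x := by rw [hab]; simp
        rw [h1] at e1; rw [h2] at e2
        linarith
      · rw [ha' x h, ha x h]
    have ha'' : a' = a := ContMDiffMap.ext key
    have hb'' : b' = b := by
      apply ContMDiffMap.ext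
      intro x
      have e1 : f x = a' x + b' x := by rw [hab']; simp
      have e2 : f x = a x + b x := by rw [hab]; simp
      have := key x
      linarith
    simp [ha'', hb'']
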